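/- For every l ∈ ℕ, every i ∈ T with |i| ≤ l, and every u ∈ ℝ^d with |u| = 1, almost surely |⟨u,Y_l⟩| ≥ |⟨Π_i^* u, [Y_{l−|i|}]_i⟩| − ∑_{k=1}^{|i|} ‖Π_{i|_{k−1}}‖·|Z_{l,i|_k}|. -/

import Mathlib

open MeasureTheory ProbabilityTheory Filter Matrix RealInnerProductSpace

noncomputable section

/-- Vectors in `ℝ^d` with the Euclidean norm. -/
abbrev Vec (d : ℕ) := EuclideanSpace ℝ (Fin d)

/-- `d × d` real matrices. -/
abbrev Mat (d : ℕ) := Matrix (Fin d) (Fin d) ℝ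

variable {d : ℕ}

instance matMeasurableSpace : MeasurableSpace (Mat d) :=
  (inferInstance : MeasurableSpace (Fin d → Fin d → ℝ))

instance matMeasureSpace : MeasureSpace (Mat d) :=
  (inferInstance : MeasureSpace (Fin d → Fin d → ℝ))

/-- Action of a matrix on a Euclidean vector. -/
def mv (a : Mat d) (x : Vec d) : Vec d := Matrix.toEuclideanLin a x

/-- Operator norm of a matrix acting on Euclidean space. -/
def opNorm (a : Mat d) : ℝ := ‖Matrix.toEuclideanCLM (𝕜 := ℝ) a‖

/-- Product of the edge weights along the path from node `j` to node `j ++ i`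
in the Ulam–Harris tree, where `An j' i'` is the weight of the edge from `j'`
to its `i'`-th child. -/
def pathProdFrom {Ω : Type} (An : List ℕ → ℕ → Ω → Mat d) (j : List ℕ) (i : List ℕ)
    (ω : Ω) : Mat d :=
  (List.ofFn (fun k : Fin i.length => An (j ++ i.take (k : ℕ)) (i.get k) ω)).prod

/-- Product of the edge weights from the root to node `i` (denoted `Π_i`). -/
def pathProd {Ω : Type} (An : List ℕ → ℕ → Ω → Mat d) (i : List ℕ) (ω : Ω) : Mat d :=
  pathProdFrom An ([]) i ω

/-- The spine `(1,1,…,1)` of length `n`. -/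
def spine (n : ℕ) : List ℕ := List.replicate n 1

/-- Longest common prefix of two nodes (denoted `i ∧ i'` in the paper). -/
def lcp : List ℕ → List ℕ → List ℕ
  | a :: as, b :: bs => if a = b then a :: lcp as bs else ([])
  | _, _ => ([])

/-- Membership of a node in the (random) tree `T` determined by the offspring
numbers `Nn`. -/
def memT {Ω : Type} (Nn : List ℕ → Ω → ℕ) (ω : Ω) (i : List ℕ) : Prop :=
  ∀ k : Fin i.length, 1 ≤ i.get k ∧ i.get k ≤ Nn (i.take (k : ℕ)) ω

/-- Codomain of the random data attached to a node: `inl j` carries the copy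
`(Q_j, (A_{ji})_i)` and `inr j` carries the copy `X_j`. -/
def copyType (d : ℕ) : List ℕ ⊕ List ℕ → Type
  | Sum.inl _ => Vec d × (ℕ → Mat d)
  | Sum.inr _ => Vec d

instance copyTypeMS (d : ℕ) : ∀ t, MeasurableSpace (copyType d t) := fun t => by
  cases t with
  | inl _ => exact (inferInstance : MeasurableSpace (Vec d × (ℕ → Mat d)))
  | inr _ => exact (inferInstance : MeasurableSpace (Vec d))

/-- The family of node data, bundled as a single family of random variables. -/
def nodeFun {Ω : Type} (Qn : List ℕ → Ω → Vec d) (An : List ℕ → ℕ → Ω → Mat d)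
    (Xn : List ℕ → Ω → Vec d) : ∀ t : List ℕ ⊕ List ℕ, Ω → copyType d t
  | Sum.inl j => fun ω => (Qn j ω, fun i => An j i ω)
  | Sum.inr j => Xn j

/-- The full setting for the multivariate smoothing transform: a probability space
carrying the random element `(Q, (A_i)_{i ≥ 1})` (with `A_0 := 0` by convention,
since indices start at `1`), i.i.d. copies `(Q_j, (A_{ji})_i)` of it and i.i.d.
copies `X_j` of a random vector `X` attached to the nodes `j` of the Ulam–Harris
tree, together with the function `k(s) = lim_n (E‖M_n ⋯ M_1‖^s)^{1/n}`, where the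
`M_i` are i.i.d. with the law `μ` of `A_1^*`. -/
structure Setup (d : ℕ) (Ω : Type) [MeasurableSpace Ω] where
  P : Measure Ω
  probP : IsProbabilityMeasure P
  Qn : List ℕ → Ω → Vec d
  An : List ℕ → ℕ → Ω → Mat d
  Xn : List ℕ → Ω → Vec d
  X : Ω → Vec d
  Nn : List ℕ → Ω → ℕ
  kFun : ℝ → ℝ
  measQn : ∀ j, Measurable (Qn j)
  measAn : ∀ j i, Measurable (An j i)
  measXn : ∀ j, Measurable (Xn j)
  measX : Measurable X
  measNn : ∀ j, Measurable (Nn j)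
  hA0 : ∀ j ω, An j 0 ω = 0
  hNmax : ∀ j ω i, Nn j ω < i → An j i ω = 0
  hNattain : ∀ j ω, Nn j ω ≠ 0 → An j (Nn j ω) ω ≠ 0
  indepCopies : iIndepFun (m := copyTypeMS d) (nodeFun Qn An Xn) P
  lawQA : ∀ j, P.map (fun ω => (Qn j ω, fun i => An j i ω))
      = P.map (fun ω => (Qn ([]) ω, fun i => An ([]) i ω))
  lawXn : ∀ j, P.map (Xn j) = P.map X
  hkFun : ∀ s : ℝ, 0 ≤ s →
    Integrable (fun ω => opNorm (An ([]) 1 ω) ^ s) P →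
    Tendsto (fun n : ℕ => (∫ ω, opNorm (pathProd An (spine n) ω) ^ s ∂P) ^ ((n : ℝ)⁻¹))
      atTop (nhds (kFun s))

attribute [instance] Setup.probP

namespace Setup

variable {Ω : Type} [MeasurableSpace Ω] (S : Setup d Ω)

/-- The law `μ` of `A_1^*`. -/
def muA : Measure (Mat d) := S.P.map (fun ω => (S.An ([]) 1 ω)ᵀ)

/-- `E[N]`. -/
def EN : ℝ := ∫ ω, (S.Nn ([]) ω : ℝ) ∂S.P

/-- `m(s) := E[N] · k(s)`. -/
def mFun (s : ℝ) : ℝ := S.EN * S.kFun s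

/-- `Π_n^* = M_n ⋯ M_1`, realized as the transpose of the weight product along
the spine of the tree (so that the `M_i` are i.i.d. with law `μ`). -/
def PiStar (n : ℕ) (ω : Ω) : Mat d := (pathProd S.An (spine n) ω)ᵀ

end Setup

namespace Setup

variable {d : ℕ} {Ω : Type} [MeasurableSpace Ω] (S : Setup d Ω)

/-- `Y_m` built from the data of the subtree rooted at `j` (denoted `[Y_m]_j`). -/
def Ysub (j : List ℕ) (m : ℕ) (ω : Ω) : Vec d :=
  (∑' i : List ℕ, if i.length < m then mv (pathProdFrom S.An j i ω) (S.Qn (j ++ i) ω) else 0)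
    + (∑' i : List ℕ, if i.length = m then mv (pathProdFrom S.An j i ω) (S.Xn (j ++ i) ω) else 0)

/-- The weighted branching process `Y_l` associated with `(Q, (A_i))` and `X`. -/
def Y (l : ℕ) (ω : Ω) : Vec d := S.Ysub ([]) l ω

/-- `Z_{l,jc} = ∑_{j' ≤ N_j, j' ≠ c} A_{jj'} [Y_{l-|j|-1}]_{jj'} + Q_j`. -/
def Zwbp (l : ℕ) (j : List ℕ) (c : ℕ) (ω : Ω) : Vec d :=
  (∑ j' ∈ (Finset.Icc 1 (S.Nn j ω)).erase c,
      mv (S.An j j' ω) (S.Ysub (j ++ [j']) (l - j.length - 1) ω))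
    + S.Qn j ω

/-- `Z` at node `j` with excluded child `c`:
`∑_{j' ≤ N_j, j' ≠ c} A_{jj'} X_{jj'} + Q_j`. -/
def Zx (j : List ℕ) (c : ℕ) (ω : Ω) : Vec d :=
  (∑ j' ∈ (Finset.Icc 1 (S.Nn j ω)).erase c, mv (S.An j j' ω) (S.Xn (j ++ [j']) ω))
    + S.Qn j ω

/-- The event `V_{i,t}` (for direction `u` and constants `C0`, `δ`). -/
def Vset (u : Vec d) (C0 δ t : ℝ) (i : List ℕ) : Set Ω :=
  {ω | t ≤ ‖mv ((pathProd S.An i ω)ᵀ) u‖ ∧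
    ∀ k : Fin i.length,
      opNorm ((pathProd S.An (i.take (k : ℕ)) ω)ᵀ) * max ‖S.Zx (i.take (k : ℕ)) (i.get k) ω‖ 1
        ≤ Real.exp (-(((i.length : ℝ) - (k : ℕ)) * δ)) * (C0 * t)}

/-- The event `W_{i,i',t}` (for direction `u` and constants `C0`, `δ`). -/
def Wset (u : Vec d) (C0 δ t : ℝ) (i i' : List ℕ) : Set Ω :=
  {ω | t < ‖mv ((pathProd S.An i ω)ᵀ) u‖ ∧ t < ‖mv ((pathProd S.An i' ω)ᵀ) u‖ ∧
    opNorm (pathProd S.An (lcp i i') ω)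
      ≤ C0 * t * Real.exp (-δ * ((i.length : ℝ) - (lcp i i').length))}

/-- The event `V_{n,t}` built from the i.i.d. sequence `(M_n, Z_n)`, where
`M_n` is the transpose of the `n`-th spine weight and `Z_n` the corresponding
`Z`-variable (excluding the spine child `1`). -/
def Vnt (u : Vec d) (C0 δ t : ℝ) (n : ℕ) : Set Ω :=
  {ω | t ≤ ‖mv (S.PiStar n ω) u‖ ∧
    ∀ k : ℕ, k < n →
      opNorm (S.PiStar k ω) * max ‖S.Zx (spine k) 1 ω‖ 1
        ≤ Real.exp (-(((n : ℝ) - k) * δ)) * (C0 * t)}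

/-- The σ-algebra generated by the shape of the tree, i.e. by the offspring
numbers `(N_j)_j`. -/
def treeSigma : MeasurableSpace Ω :=
  ⨆ j : List ℕ, MeasurableSpace.comap (S.Nn j) (inferInstance : MeasurableSpace ℕ)

end Setup

/-- `n_t := ⌈log t / ρ⌉`. -/
def ntOf (ρ t : ℝ) : ℕ := ⌈Real.log t / ρ⌉₊

/-- The set `L_t` of generations used for the sparse subtree `W`. -/
def LtSet (C1 nt : ℕ) : Set ℕ :=
  {l | C1 ∣ l ∧ (nt : ℝ) - Real.sqrt nt ≤ l ∧ (l : ℝ) < nt - Real.sqrt nt / 2}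

namespace Setup

variable {d : ℕ} {Ω : Type} [MeasurableSpace Ω] (S : Setup d Ω)

/-- The sparse (random) subtree `W ⊆ T`: nodes whose generation lies in `L_t`
and whose last `C1` entries are all equal to `1`. -/
def Wsparse (C1 nt : ℕ) (ω : Ω) : Set (List ℕ) :=
  {i | memT S.Nn ω i ∧ i.length ∈ LtSet C1 nt ∧
    ∀ k : Fin i.length, i.length - C1 ≤ (k : ℕ) → i.get k = 1}

/-- `E[∑_{i ∈ W} P(V_{i,t})]` for a random subset `W` of the tree. -/
def ESumV (u : Vec d) (C0 δ t : ℝ) (W : Ω → Set (List ℕ)) : ENNReal :=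
  ∫⁻ ω, ∑' i : List ℕ, Set.indicator (W ω) (fun i' => S.P (S.Vset u C0 δ t i')) i ∂S.P

/-- `E[∑_{i ∈ W} ∑_{i' ∈ W, |i'| ≤ |i|, i' ≠ i} P(W_{i,i',t})]` for a random
subset `W` of the tree. -/
def ESumW (u : Vec d) (C0 δ t : ℝ) (W : Ω → Set (List ℕ)) : ENNReal :=
  ∫⁻ ω, ∑' p : List ℕ × List ℕ,
    Set.indicator {p' : List ℕ × List ℕ |
        p'.1 ∈ W ω ∧ p'.2 ∈ W ω ∧ p'.2.length ≤ p'.1.length ∧ p'.2 ≠ p'.1}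
      (fun p' => S.P (S.Wset u C0 δ t p'.1 p'.2)) p ∂S.P

end Setup

/-- The number of nodes in a set of nodes, as an element of `ENNReal`. -/
def countNodes (s : Set (List ℕ)) : ENNReal :=
  ∑' i : List ℕ, Set.indicator s (fun _ => (1 : ENNReal)) i
/-- The support of a measure on matrices: points all of whose neighbourhoods
have positive measure. -/
def msupp {d : ℕ} (μm : MeasureTheory.Measure (Mat d)) : Set (Mat d) :=
  {a | ∀ U : Set (Mat d), IsOpen U → a ∈ U → μm U ≠ 0}

/-- A nonnegative matrix which has no zero row and no zero column. -/
def Allowable {d : ℕ} (a : Mat d) : Prop :=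
  (∀ r c, 0 ≤ a r c) ∧ (∀ r, ∃ c, a r c ≠ 0) ∧ (∀ c, ∃ r, a r c ≠ 0)

/-- A matrix with strictly positive entries. -/
def PosMat {d : ℕ} (a : Mat d) : Prop := ∀ r c, 0 < a r c

/-- A proximal matrix: it has an algebraically simple real eigenvalue which
strictly dominates all other (complex) eigenvalues in absolute value. -/
def Proximal {d : ℕ} (a : Mat d) : Prop :=
  ∃ lam : ℝ, Polynomial.rootMultiplicity (lam : ℂ)
      ((Matrix.charpoly a).map (algebraMap ℝ ℂ)) = 1 ∧
    ∀ z : ℂ, ((Matrix.charpoly a).map (algebraMap ℝ ℂ)).IsRoot z → z ≠ (lam : ℂ) →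
      ‖z‖ < |lam|

/-- Strong irreducibility of (the semigroup generated by the support of) `μ`:
there is no `Γ`-invariant finite union of proper nonzero subspaces. -/
def StrongIrred {d : ℕ} (μm : MeasureTheory.Measure (Mat d)) : Prop :=
  ¬ ∃ F : Finset (Submodule ℝ (Vec d)), F.Nonempty ∧ (∀ W ∈ F, W ≠ ⊥ ∧ W ≠ ⊤) ∧
    ∀ a ∈ Subsemigroup.closure (msupp μm), ∀ x ∈ ⋃ W ∈ F, (W : Set (Vec d)),
      mv a x ∈ ⋃ W ∈ F, (W : Set (Vec d))

/-- There is no `Γ`-invariant proper closed convex cone. -/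
def NoInvCone {d : ℕ} (μm : MeasureTheory.Measure (Mat d)) : Prop :=
  ¬ ∃ C : Set (Vec d), IsClosed C ∧ Convex ℝ C ∧
    (∀ r : ℝ, 0 ≤ r → ∀ x ∈ C, r • x ∈ C) ∧ C ≠ {0} ∧ C.Nonempty ∧
    C ∩ (-C) ⊆ {0} ∧ ∀ a ∈ Subsemigroup.closure (msupp μm), ∀ x ∈ C, mv a x ∈ C

/-- Condition (i-p,o): strong irreducibility, proximality, and absence of an
invariant proper closed convex cone. -/
def IPO {d : ℕ} (μm : MeasureTheory.Measure (Mat d)) : Prop :=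
  StrongIrred μm ∧ (∃ a ∈ Subsemigroup.closure (msupp μm), Proximal a) ∧ NoInvCone μm

/-- The set `S(Γ)` of logarithms of dominant eigenvalues (with nonnegative
eigenvector) of the positive matrices of the semigroup `Γ`. -/
def DomEigLog {d : ℕ} (μm : MeasureTheory.Measure (Mat d)) : Set ℝ :=
  {x | ∃ a ∈ Subsemigroup.closure (msupp μm), PosMat a ∧
    ∃ v : Vec d, v ≠ 0 ∧ (∀ i, 0 ≤ v i) ∧ mv a v = Real.exp x • v}

/-- `μ` is non-arithmetic: the additive subgroup generated by `S(Γ)` is dense. -/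
def NonArith {d : ℕ} (μm : MeasureTheory.Measure (Mat d)) : Prop :=
  Dense ((AddSubgroup.closure (DomEigLog μm) : AddSubgroup ℝ) : Set ℝ)

/-- Marker for the two geometric settings: `ga` for nonnegative matrices
(condition (C)), `gb` for invertible matrices (conditions (i-p,o) or (i-d)). -/
inductive GeoCase | ga | gb

/-- The relevant part of the unit sphere: `S^{d-1} ∩ [0,∞)^d` in case (Ga), the
whole sphere `S^{d-1}` in case (Gb). -/
def Sph (d : ℕ) : GeoCase → Set (Vec d)
  | GeoCase.ga => {x | ‖x‖ = 1 ∧ ∀ i, 0 ≤ x i}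
  | GeoCase.gb => {x | ‖x‖ = 1}

/-- The relevant cone: `[0,∞)^d` in case (Ga), all of `ℝ^d` in case (Gb). -/
def coneSpace (d : ℕ) : GeoCase → Set (Vec d)
  | GeoCase.ga => {x | ∀ i, 0 ≤ x i}
  | GeoCase.gb => Set.univ

/-- `ι(a) := inf_{x ∈ S} |ax|`. -/
def iotaS (d : ℕ) (g : GeoCase) (a : Mat d) : ℝ :=
  sInf ((fun x => ‖mv a x‖) '' Sph d g)

namespace Setup

variable {d : ℕ} {Ω : Type} [MeasurableSpace Ω] (S : Setup d Ω)

/-- Condition (i-d): the projective chain can reach every open set of the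
sphere, and some power of `Π_n^*` has a density component. -/
def IDcond : Prop :=
  (∀ B : Set (Vec d), IsOpen B → ∀ x : Vec d, ‖x‖ = 1 → (∃ y ∈ B, ‖y‖ = 1) →
    ∃ n : ℕ, S.P {ω | (‖mv (S.PiStar n ω) x‖)⁻¹ • mv (S.PiStar n ω) x ∈ B} ≠ 0) ∧
  (∃ m0 : Mat d, IsUnit m0 ∧ ∃ dl : ℝ, 0 < dl ∧ ∃ c : ℝ, 0 < c ∧ ∃ n0 : ℕ,
    ∀ E : Set (Mat d), MeasurableSet E →
      ENNReal.ofReal c * MeasureTheory.volume (E ∩ {m : Mat d | opNorm (m - m0) < dl})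
        ≤ S.P.map (S.PiStar n0) E)

/-- Geometric assumption (Ga): nonnegative allowable matrices, a strictly
positive matrix in the semigroup, non-arithmeticity; `Q` is nonnegative too. -/
def GaCond : Prop :=
  (∀ᵐ ω ∂S.P, (∀ l, 0 ≤ S.Qn ([]) ω l) ∧ ∀ i r c, 0 ≤ S.An ([]) i ω r c) ∧
  (∀ a ∈ msupp S.muA, Allowable a) ∧
  (∃ a ∈ Subsemigroup.closure (msupp S.muA), PosMat a) ∧
  NonArith S.muA

/-- Geometric assumption (Gb): invertible matrices satisfying (i-p,o) or (i-d). -/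
def GbCond : Prop :=
  (∀ᵐ ω ∂S.P, ∀ i, 1 ≤ i → i ≤ S.Nn ([]) ω → IsUnit (S.An ([]) i ω)) ∧
  (IPO S.muA ∨ S.IDcond)

/-- The geometric assumption corresponding to the case marker. -/
def GeoH : GeoCase → Prop
  | GeoCase.ga => S.GaCond
  | GeoCase.gb => S.GbCond

/-- Case (N-random): `1 < E[N] < ∞`; conditioned upon `N`, the matrices
`(A_i)_{i=1}^N` are i.i.d. (with the law of `A_1`), and `Q` is independent of
`(N, (A_i)_{i ≥ 1})`. -/
def NRandom : Prop :=
  MeasureTheory.Integrable (fun ω => (S.Nn ([]) ω : ℝ)) S.P ∧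
  1 < S.EN ∧
  (∀ n : ℕ, S.P {ω | S.Nn ([]) ω = n} ≠ 0 →
    ProbabilityTheory.iIndepFun (m := fun _ : Fin n => matMeasurableSpace)
      (fun i ω => S.An ([]) ((i : ℕ) + 1) ω)
      (ProbabilityTheory.cond S.P {ω | S.Nn ([]) ω = n}) ∧
    ∀ i : Fin n,
      (ProbabilityTheory.cond S.P {ω | S.Nn ([]) ω = n}).map (S.An ([]) ((i : ℕ) + 1))
        = S.P.map (S.An ([]) 1)) ∧
  ProbabilityTheory.IndepFun (S.Qn ([]))
    (fun ω => (S.Nn ([]) ω, fun i => S.An ([]) i ω)) S.P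

/-- Case (N-fixed): `N ≥ 2` is constant, the supports of the `A_i` are bounded,
and `(A_i)_{i=1}^N` are exchangeable (hence identically distributed). -/
def NFixed : Prop :=
  ∃ n : ℕ, 2 ≤ n ∧ (∀ ω, S.Nn ([]) ω = n) ∧
    (∃ c : ℝ, ∀ᵐ ω ∂S.P, ∀ i, opNorm (S.An ([]) i ω) ≤ c) ∧
    ∀ σ : Equiv.Perm (Fin n),
      S.P.map (fun ω (i : Fin n) => S.An ([]) ((i : ℕ) + 1) ω)
        = S.P.map (fun ω (i : Fin n) => S.An ([]) (((σ i : Fin n) : ℕ) + 1) ω)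

/-- Moment assumptions (M1): `0 < α < β`, `m(α) = m(β) = 1`,
`E|Q|^{β+ε} < ∞` and `E[‖A_1^*‖^{β+ε} ι(A_1^*)^{-ε}] < ∞`. -/
def M1 (g : GeoCase) (α β ε : ℝ) : Prop :=
  0 < α ∧ α < β ∧ 0 < ε ∧ S.mFun α = 1 ∧ S.mFun β = 1 ∧
  MeasureTheory.Integrable (fun ω => ‖S.Qn ([]) ω‖ ^ (β + ε)) S.P ∧
  MeasureTheory.Integrable
    (fun ω => opNorm ((S.An ([]) 1 ω)ᵀ) ^ (β + ε) * iotaS d g ((S.An ([]) 1 ω)ᵀ) ^ (-ε)) S.P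

/-- `X` is a fixed point of the multivariate smoothing transform:
`X` has the same law as `∑_{i=1}^N A_i X_i + Q`, where the `X_i = X_{(i)}` are
the i.i.d. copies of `X` attached to the first generation, independent of
`(Q, (A_i))`. -/
def FixedPoint : Prop :=
  S.P.map S.X
    = S.P.map (fun ω =>
        (∑ i ∈ Finset.Icc 1 (S.Nn ([]) ω), mv (S.An ([]) i ω) (S.Xn ([i]) ω)) + S.Qn ([]) ω)

/-- Moment assumption (M2): `X` is a nondegenerate fixed point with
`E|X|^s < ∞` for all `s < β`. -/
def M2 (β : ℝ) : Prop :=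
  S.FixedPoint ∧ (¬ ∃ c : Vec d, ∀ᵐ ω ∂S.P, S.X ω = c) ∧
  ∀ s : ℝ, 0 ≤ s → s < β → MeasureTheory.Integrable (fun ω => ‖S.X ω‖ ^ s) S.P

end Setup

/-!
Fix a node `i` and peel off the path from the root to `i` one generation at a time. At a node
`j` with next child `c`, the subtree process splits as `[Y_m]_j = A_{jc} [Y_{m-1}]_{jc} + Z_{jc}`,
so moving the weights to the other side of the inner product gives, for every `ω`, the identity
`⟨u, Y_l⟩ = ⟨Π_i^* u, [Y_{l-|i|}]_i⟩ + ∑_k ⟨Π_{i|_{k-1}}^* u, Z_{l,i|_k}⟩`.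
Each error term is at most `‖Π_{i|_{k-1}}‖ |Z_{l,i|_k}|` by Cauchy–Schwarz, and the triangle
inequality finishes the proof.
-/

lemma mv_eq_toEuclideanCLM (a : Mat d) (x : Vec d) :
    mv a x = Matrix.toEuclideanCLM (𝕜 := ℝ) a x :=
  rfl

@[simp] lemma mv_zero_left (x : Vec d) : mv 0 x = 0 := by simp [mv_eq_toEuclideanCLM]

@[simp] lemma mv_one (x : Vec d) : mv 1 x = x := by simp [mv_eq_toEuclideanCLM]

lemma mv_mul (a b : Mat d) (x : Vec d) : mv (a * b) x = mv a (mv b x) := by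
  simp [mv_eq_toEuclideanCLM]

lemma norm_mv_le (a : Mat d) (x : Vec d) : ‖mv a x‖ ≤ opNorm a * ‖x‖ :=
  (Matrix.toEuclideanCLM (𝕜 := ℝ) a).le_opNorm x

lemma toEuclideanCLM_transpose (a : Mat d) :
    Matrix.toEuclideanCLM (𝕜 := ℝ) aᵀ
      = ContinuousLinearMap.adjoint (Matrix.toEuclideanCLM (𝕜 := ℝ) a) := by
  rw [← Matrix.conjTranspose_eq_transpose_of_trivial, ← Matrix.star_eq_conjTranspose, map_star,
    ContinuousLinearMap.star_eq_adjoint]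

lemma inner_mv_transpose (a : Mat d) (x y : Vec d) : ⟪mv aᵀ x, y⟫ = ⟪x, mv a y⟫ := by
  rw [mv_eq_toEuclideanCLM, toEuclideanCLM_transpose, ContinuousLinearMap.adjoint_inner_left]
  rfl

section PathProducts

variable {Ω : Type} (An : List ℕ → ℕ → Ω → Mat d) (ω : Ω)

@[simp] lemma pathProdFrom_nil (j : List ℕ) : pathProdFrom An j [] ω = 1 := by
  simp [pathProdFrom]

lemma pathProdFrom_cons (j : List ℕ) (c : ℕ) (r : List ℕ) :
    pathProdFrom An j (c :: r) ω = An j c ω * pathProdFrom An (j ++ [c]) r ω := by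
  simp [pathProdFrom, List.ofFn_succ]

lemma pathProdFrom_concat (j i : List ℕ) (c : ℕ) :
    pathProdFrom An j (i ++ [c]) ω = pathProdFrom An j i ω * An (j ++ i) c ω := by
  induction i generalizing j with
  | nil => simp [pathProdFrom_cons]
  | cons b i ih => simp [pathProdFrom_cons, ih, mul_assoc]

lemma pathProd_concat (i : List ℕ) (c : ℕ) :
    pathProd An (i ++ [c]) ω = pathProd An i ω * An i c ω := by
  simp [pathProd, pathProdFrom_concat]

end PathProducts

lemma tsum_list_eq_add_tsum_tsum_cons {α E : Type*} [NormedAddCommGroup E] [CompleteSpace E]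
    {f : List α → E} (hf : Summable f) :
    ∑' l, f l = f [] + ∑' (a) (l), f (a :: l) := by
  classical
  have hcons : Function.Injective (fun p : α × List α => p.1 :: p.2) := fun p q h => by
    simpa [Prod.ext_iff] using h
  have hsupp : (fun l => if l = [] then 0 else f l).support
      ⊆ Set.range (fun p : α × List α => p.1 :: p.2) := by
    rintro (_ | ⟨a, l⟩) h
    · simp at h
    · exact ⟨(a, l), rfl⟩
  rw [hf.tsum_eq_add_tsum_ite [], ← hcons.tsum_eq hsupp]
  simp only [reduceCtorEq, if_false]
  exact congrArg _ ((hf.comp_injective hcons).tsum_prod' fun a =>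
    hf.comp_injective (List.cons_injective (a := a)))

section SubtreeSums

variable {Ω : Type} (An : List ℕ → ℕ → Ω → Mat d) (N : List ℕ → ℕ) (ω : Ω)

def subtreeSum (p : ℕ → Prop) [DecidablePred p] (v : List ℕ → Ω → Vec d) (j : List ℕ) :
    Vec d :=
  ∑' i : List ℕ, if p i.length then mv (pathProdFrom An j i ω) (v (j ++ i) ω) else 0

variable {An N ω}

lemma finite_setOf_pathProdFrom_ne_zero (hA : ∀ j c, c ∉ Finset.Icc 1 (N j) → An j c ω = 0)
    (m : ℕ) (j : List ℕ) :
    {i : List ℕ | i.length ≤ m ∧ pathProdFrom An j i ω ≠ 0}.Finite := by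
  induction m generalizing j with
  | zero =>
    refine (Set.finite_singleton []).subset ?_
    rintro i ⟨hi, -⟩
    simpa using hi
  | succ m ih =>
    refine ((Set.finite_Icc 1 (N j)).biUnion fun c _ => (ih (j ++ [c])).image (c :: ·)).insert []
      |>.subset ?_
    rintro (_ | ⟨c, r⟩) ⟨hlen, hne⟩
    · exact Set.mem_insert _ _
    · rw [pathProdFrom_cons] at hne
      have hc : c ∈ Finset.Icc 1 (N j) := by
        by_contra hc
        simp [hA j c hc] at hne
      refine Set.mem_insert_of_mem _
        (Set.mem_biUnion (by simpa using hc) ⟨r, ⟨?_, ?_⟩, rfl⟩)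
      · simpa using hlen
      · exact right_ne_zero_of_mul hne

lemma summable_subtreeSum (hA : ∀ j c, c ∉ Finset.Icc 1 (N j) → An j c ω = 0)
    {p : ℕ → Prop} [DecidablePred p] {m : ℕ} (hp : ∀ n, p n → n ≤ m)
    (v : List ℕ → Ω → Vec d) (j : List ℕ) :
    Summable fun i : List ℕ =>
      if p i.length then mv (pathProdFrom An j i ω) (v (j ++ i) ω) else 0 := by
  refine summable_of_hasFiniteSupport ((finite_setOf_pathProdFrom_ne_zero hA m j).subset ?_)
  intro i hi
  by_cases h : p i.length
  · refine ⟨hp _ h, fun h0 => hi ?_⟩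
    simp [h, h0]
  · simp [h] at hi

lemma subtreeSum_eq_add_sum (hA : ∀ j c, c ∉ Finset.Icc 1 (N j) → An j c ω = 0)
    {p : ℕ → Prop} [DecidablePred p] {m : ℕ} (hp : ∀ n, p n → n ≤ m)
    {q : ℕ → Prop} [DecidablePred q] (hpq : ∀ n, q n ↔ p (n + 1))
    (v : List ℕ → Ω → Vec d) (j : List ℕ) :
    subtreeSum An ω p v j = (if p 0 then v j ω else 0)
      + ∑ c ∈ Finset.Icc 1 (N j), mv (An j c ω) (subtreeSum An ω q v (j ++ [c])) := by
  have hq : ∀ n, q n → n ≤ m := fun n h => (hp _ ((hpq n).1 h)).trans' n.le_succ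
  rw [subtreeSum, tsum_list_eq_add_tsum_tsum_cons (summable_subtreeSum hA hp v j)]
  congr 1
  · by_cases h : p 0 <;> simp [h]
  · rw [tsum_eq_sum (s := Finset.Icc 1 (N j)) fun c hc => ?_]
    · refine Finset.sum_congr rfl fun c _ => ?_
      rw [subtreeSum, mv_eq_toEuclideanCLM,
        ContinuousLinearMap.map_tsum _ (summable_subtreeSum hA hq v _)]
      refine tsum_congr fun r => ?_
      by_cases h : q r.length <;> simp [h, ← hpq, pathProdFrom_cons, mv_eq_toEuclideanCLM]
    · simp [pathProdFrom_cons, hA j c hc]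

end SubtreeSums

lemma sum_take_get_append_singleton {α M : Type*} [AddCommMonoid M] (f : List α → α → M)
    (i : List α) (c : α) :
    ∑ k : Fin (i ++ [c]).length, f ((i ++ [c]).take k) ((i ++ [c]).get k)
      = ∑ k : Fin i.length, f (i.take k) (i.get k) + f i c := by
  rw [← Fin.sum_congr' _ (by simp : i.length + 1 = (i ++ [c]).length), Fin.sum_univ_castSucc]
  congr 1
  · refine Finset.sum_congr rfl fun k _ => ?_
    simp [List.take_append_of_le_length k.isLt.le, List.getElem_append_left k.isLt]
  · simp

lemma abs_inner_mv_transpose_le (a : Mat d) (u z : Vec d) :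
    |⟪mv aᵀ u, z⟫| ≤ opNorm a * ‖u‖ * ‖z‖ := by
  rw [inner_mv_transpose]
  calc |⟪u, mv a z⟫| ≤ ‖u‖ * ‖mv a z‖ := abs_real_inner_le_norm _ _
    _ ≤ ‖u‖ * (opNorm a * ‖z‖) := by gcongr; exact norm_mv_le a z
    _ = opNorm a * ‖u‖ * ‖z‖ := by ring

lemma inner_eq_inner_pathProd_add_sum {Ω : Type} (An : List ℕ → ℕ → Ω → Mat d) (ω : Ω)
    (y : List ℕ → Vec d) (z : List ℕ → ℕ → Vec d) {n : ℕ}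
    (hy : ∀ j c, j.length < n → y j = mv (An j c ω) (y (j ++ [c])) + z j c) (u : Vec d) :
    ∀ i : List ℕ, i.length ≤ n →
      ⟪u, y []⟫ = ⟪mv (pathProd An i ω)ᵀ u, y i⟫
        + ∑ k : Fin i.length,
            ⟪mv (pathProd An (i.take k) ω)ᵀ u, z (i.take k) (i.get k)⟫ := by
  intro i
  induction i using List.reverseRecOn with
  | nil => simp [pathProd]
  | append_singleton j c ih =>
    intro hjc
    have hj : j.length < n := by simp at hjc; omega
    rw [ih hj.le, hy j c hj, inner_add_right,
      sum_take_get_append_singleton (fun a b => ⟪mv (pathProd An a ω)ᵀ u, z a b⟫),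
      pathProd_concat, Matrix.transpose_mul, mv_mul, inner_mv_transpose _ (mv _ u), inner_mv_transpose]
    ring

namespace Setup

variable {Ω : Type} [MeasurableSpace Ω] (S : Setup d Ω)

lemma An_eq_zero_of_notMem_Icc (ω : Ω) (j : List ℕ) (c : ℕ)
    (hc : c ∉ Finset.Icc 1 (S.Nn j ω)) : S.An j c ω = 0 := by
  rcases Nat.eq_zero_or_pos c with rfl | hc0
  · exact S.hA0 j ω
  · exact S.hNmax j ω c (by simpa [Finset.mem_Icc, Nat.one_le_iff_ne_zero, hc0.ne'] using hc)

lemma Ysub_eq_subtreeSum (j : List ℕ) (m : ℕ) (ω : Ω) :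
    S.Ysub j m ω = subtreeSum S.An ω (· < m) S.Qn j + subtreeSum S.An ω (· = m) S.Xn j :=
  rfl

lemma Ysub_eq_sum_add (j : List ℕ) {m : ℕ} (hm : m ≠ 0) (ω : Ω) :
    S.Ysub j m ω
      = ∑ c ∈ Finset.Icc 1 (S.Nn j ω), mv (S.An j c ω) (S.Ysub (j ++ [c]) (m - 1) ω)
        + S.Qn j ω := by
  have hA := S.An_eq_zero_of_notMem_Icc ω
  rw [Ysub_eq_subtreeSum,
    subtreeSum_eq_add_sum hA (fun n (h : n < m) => h.le) (q := (· < m - 1)) (fun n => by omega),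
    subtreeSum_eq_add_sum hA (fun n (h : n = m) => h.le) (q := (· = m - 1)) (fun n => by omega)]
  simp only [Ysub_eq_subtreeSum, mv_eq_toEuclideanCLM, map_add, Finset.sum_add_distrib]
  simp [Nat.pos_of_ne_zero hm, Ne.symm hm]
  abel

lemma Ysub_eq_mv_add_Zwbp {l : ℕ} {j : List ℕ} (hj : j.length < l) (c : ℕ) (ω : Ω) :
    S.Ysub j (l - j.length) ω
      = mv (S.An j c ω) (S.Ysub (j ++ [c]) (l - (j ++ [c]).length) ω) + S.Zwbp l j c ω := by
  rw [S.Ysub_eq_sum_add j (by omega), Zwbp, List.length_append, List.length_singleton,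
    Nat.sub_add_eq]
  by_cases hc : c ∈ Finset.Icc 1 (S.Nn j ω)
  · rw [← Finset.add_sum_erase _ _ hc, add_assoc]
  · rw [Finset.erase_eq_of_notMem hc, S.An_eq_zero_of_notMem_Icc ω j c hc, mv_zero_left, zero_add]

end Setup

/-- almost surely, for every node `i ∈ T` with `|i| ≤ l` and every
unit vector `u`,
`|⟨u,Y_l⟩| ≥ |⟨Π_i^* u, [Y_{l−|i|}]_i⟩| − ∑_{k=1}^{|i|} ‖Π_{i|_{k−1}}‖·|Z_{l,i|_k}|`. -/
theorem inner_Y_lower_bound {d : ℕ} {Ω : Type} [MeasurableSpace Ω] (S : Setup d Ω) :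
    ∀ l : ℕ, ∀ i : List ℕ, i.length ≤ l → ∀ u : Vec d, ‖u‖ = 1 →
      ∀ᵐ ω ∂S.P, memT S.Nn ω i →
        |⟪mv ((pathProd S.An i ω)ᵀ) u, S.Ysub i (l - i.length) ω⟫|
            - ∑ k : Fin i.length,
                opNorm (pathProd S.An (i.take (k : ℕ)) ω)
                  * ‖S.Zwbp l (i.take (k : ℕ)) (i.get k) ω‖
          ≤ |⟪u, S.Y l ω⟫| := by
  intro l i hil u hu
  refine Eventually.of_forall fun ω _ => ?_
  have hdecomp := inner_eq_inner_pathProd_add_sum S.An ω (fun j => S.Ysub j (l - j.length) ω)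
    (fun j c => S.Zwbp l j c ω) (fun j c hj => S.Ysub_eq_mv_add_Zwbp hj c ω) u i hil
  set A := ⟪mv ((pathProd S.An i ω)ᵀ) u, S.Ysub i (l - i.length) ω⟫
  set B := ∑ k : Fin i.length,
    ⟪mv (pathProd S.An (i.take k) ω)ᵀ u, S.Zwbp l (i.take k) (i.get k) ω⟫
  have hB : |B| ≤ ∑ k : Fin i.length,
      opNorm (pathProd S.An (i.take k) ω) * ‖S.Zwbp l (i.take k) (i.get k) ω‖ :=
    (Finset.abs_sum_le_sum_abs _ _).trans <| Finset.sum_le_sum fun k _ => by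
      simpa [hu] using abs_inner_mv_transpose_le _ u _
  rw [show S.Y l ω = S.Ysub [] (l - ([] : List ℕ).length) ω from rfl, hdecomp]
  have hAB : |A| ≤ |A + B| + |B| := by simpa using abs_sub (A + B) B
  linarith
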